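/- Let f : ℝ → ℝ be continuous and strictly concave on [x₁, x_N] and let N ≥ 3, with endpoints x₁ < x_N fixed. If (x₁, x₂, …, x_N) and (x₁, y₂, …, y_{N-1}, x_N) are two strictly increasing breakpoint vectors such that, in each of them, all interval maximum absolute errors E(x_i, x_{i+1}) (respectively E(y_i, y_{i+1}), with y₁ = x₁, y_N = x_N) are equal, then x_i = y_i for all i. Moreover, such a breakpoint vector minimizes max_{1 ≤ i ≤ N-1} E(x_i, x_{i+1}) over all strictly increasing choices of interior points in (x₁, x_N). -/

import Mathlib

/-- The secant line of `f` through `(u, f u)` and `(v, f v)`. -/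
noncomputable def secant (f : ℝ → ℝ) (u v : ℝ) (x : ℝ) : ℝ :=
  f u + ((f v - f u) / (v - u)) * (x - u)

/-- The maximum absolute error of the secant approximation of `f` on `[u, v]`:
`E(u,v) = sup_{x ∈ [u,v]} (f x - L_{u,v} x)`. -/
noncomputable def maxErr (f : ℝ → ℝ) (u v : ℝ) : ℝ :=
  sSup ((fun x => f x - secant f u v x) '' Set.Icc u v)

section Aux
variable {f : ℝ → ℝ} {a b : ℝ}

lemma secant_self_left (f : ℝ → ℝ) (u v : ℝ) : secant f u v u = f u := by
  simp [secant]

lemma secant_right (f : ℝ → ℝ) {u v : ℝ} (h : u < v) : secant f u v v = f v := by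
  rw [secant, div_mul_cancel₀ _ (sub_ne_zero.mpr h.ne')]; ring

lemma secant_eq_pivot_right (f : ℝ → ℝ) {u v : ℝ} (h : u < v) (x : ℝ) :
    secant f u v x = f v + ((f u - f v) / (u - v)) * (x - v) := by
  have hne : v - u ≠ 0 := sub_ne_zero.mpr h.ne'
  have hne' : u - v ≠ 0 := sub_ne_zero.mpr h.ne
  unfold secant
  field_simp
  ring

lemma contOn_err (hf : ContinuousOn f (Set.Icc a b)) {u v : ℝ}
    (hsub : Set.Icc u v ⊆ Set.Icc a b) :
    ContinuousOn (fun x => f x - secant f u v x) (Set.Icc u v) := by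
  exact (hf.mono hsub).sub (by unfold secant; fun_prop)

lemma bdd_err (hf : ContinuousOn f (Set.Icc a b)) {u v : ℝ}
    (hsub : Set.Icc u v ⊆ Set.Icc a b) :
    BddAbove ((fun x => f x - secant f u v x) '' Set.Icc u v) :=
  (isCompact_Icc.image_of_continuousOn (contOn_err hf hsub)).bddAbove

lemma le_maxErr (hf : ContinuousOn f (Set.Icc a b)) {u v : ℝ}
    (hsub : Set.Icc u v ⊆ Set.Icc a b) {x : ℝ} (hx : x ∈ Set.Icc u v) :
    f x - secant f u v x ≤ maxErr f u v :=
  le_csSup (bdd_err hf hsub) (Set.mem_image_of_mem _ hx)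

lemma maxErr_exists_max (hf : ContinuousOn f (Set.Icc a b)) {u v : ℝ} (huv : u < v)
    (hsub : Set.Icc u v ⊆ Set.Icc a b) :
    ∃ x ∈ Set.Icc u v, maxErr f u v = f x - secant f u v x :=
  isCompact_Icc.exists_sSup_image_eq (Set.nonempty_Icc.mpr huv.le) (contOn_err hf hsub)

lemma maxErr_pos (hf : ContinuousOn f (Set.Icc a b))
    (hconc : StrictConcaveOn ℝ (Set.Icc a b) f) {u v : ℝ} (huv : u < v)
    (hsub : Set.Icc u v ⊆ Set.Icc a b) :
    0 < maxErr f u v := by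
  have hm : (u + v) / 2 ∈ Set.Icc u v := ⟨by linarith, by linarith⟩
  have hkey := hconc.2 (hsub ⟨le_refl u, huv.le⟩) (hsub ⟨huv.le, le_refl v⟩) huv.ne
    (by norm_num : (0:ℝ) < 1/2) (by norm_num : (0:ℝ) < 1/2) (by norm_num)
  have hsec : secant f u v ((u + v) / 2) = (f u + f v) / 2 := by
    have hne : v - u ≠ 0 := sub_ne_zero.mpr huv.ne'
    unfold secant
    field_simp
    ring
  have h2 : (1/2 : ℝ) • u + (1/2 : ℝ) • v = (u + v) / 2 := by simp only [smul_eq_mul]; ring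
  rw [h2] at hkey
  have := le_maxErr hf hsub hm
  rw [hsec] at this
  simp only [smul_eq_mul] at hkey
  linarith

/-- strict monotonicity in the right endpoint -/
lemma maxErr_lt_right (hf : ContinuousOn f (Set.Icc a b))
    (hconc : StrictConcaveOn ℝ (Set.Icc a b) f) {u v v' : ℝ}
    (hau : a ≤ u) (huv : u < v) (hvv : v < v') (hvb : v' ≤ b) :
    maxErr f u v < maxErr f u v' := by
  have hsub : Set.Icc u v ⊆ Set.Icc a b :=
    Set.Icc_subset_Icc hau (by linarith)
  have hsub' : Set.Icc u v' ⊆ Set.Icc a b := Set.Icc_subset_Icc hau hvb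
  obtain ⟨w, hw, hwe⟩ := maxErr_exists_max hf huv hsub
  have hpos := maxErr_pos hf hconc huv hsub
  have hwu : u < w := by
    rcases eq_or_lt_of_le hw.1 with h | h
    · exfalso; rw [hwe, ← h, secant_self_left] at hpos; linarith
    · exact h
  -- slopes: slope(u,v') < slope(u,v)
  have hslope : (f v' - f u) / (v' - u) < (f v - f u) / (v - u) :=
    hconc.secant_strict_mono (hsub ⟨le_refl u, huv.le⟩) (hsub ⟨huv.le, le_refl v⟩)
      (hsub' ⟨by linarith, le_refl v'⟩) huv.ne' (by intro h; linarith [h ▸ hvv]) hvv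
  have hsec : secant f u v' w < secant f u v w := by
    unfold secant
    have : (f v' - f u) / (v' - u) * (w - u) < (f v - f u) / (v - u) * (w - u) :=
      mul_lt_mul_of_pos_right hslope (by linarith)
    linarith
  have hle := le_maxErr hf hsub' (⟨hw.1, by linarith [hw.2]⟩ : w ∈ Set.Icc u v')
  rw [hwe]; linarith

/-- strict antitonicity in the left endpoint -/
lemma maxErr_lt_left (hf : ContinuousOn f (Set.Icc a b))
    (hconc : StrictConcaveOn ℝ (Set.Icc a b) f) {u u' v : ℝ}
    (hau : a ≤ u) (huu : u < u') (huv : u' < v) (hvb : v ≤ b) :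
    maxErr f u' v < maxErr f u v := by
  have hsub' : Set.Icc u' v ⊆ Set.Icc a b := Set.Icc_subset_Icc (by linarith) hvb
  have hsub : Set.Icc u v ⊆ Set.Icc a b := Set.Icc_subset_Icc hau hvb
  obtain ⟨w, hw, hwe⟩ := maxErr_exists_max hf huv hsub'
  have hpos := maxErr_pos hf hconc huv hsub'
  have hwv : w < v := by
    rcases eq_or_lt_of_le hw.2 with h | h
    · exfalso; rw [hwe, h, secant_right f huv] at hpos; linarith
    · exact h
  -- slopes to pivot v : slope(u',v) < slope(u,v)
  have hslope : (f u' - f v) / (u' - v) < (f u - f v) / (u - v) :=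
    hconc.secant_strict_mono (hsub ⟨huv.le.trans' huu.le, le_refl v⟩ : v ∈ Set.Icc a b)
      (hsub ⟨le_refl u, by linarith⟩) (hsub' ⟨le_refl u', huv.le⟩)
      (by intro h; linarith [h ▸ huv]) huv.ne huu
  have hsec : secant f u v w < secant f u' v w := by
    rw [secant_eq_pivot_right f (by linarith : u < v), secant_eq_pivot_right f huv]
    have : (f u - f v) / (u - v) * (w - v) < (f u' - f v) / (u' - v) * (w - v) :=
      mul_lt_mul_of_neg_right hslope (by linarith)
    linarith
  have hle := le_maxErr hf hsub (⟨by linarith [hw.1], hw.2⟩ : w ∈ Set.Icc u v)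
  rw [hwe]; linarith

lemma maxErr_le_right (hf : ContinuousOn f (Set.Icc a b))
    (hconc : StrictConcaveOn ℝ (Set.Icc a b) f) {u v v' : ℝ}
    (hau : a ≤ u) (huv : u < v) (hvv : v ≤ v') (hvb : v' ≤ b) :
    maxErr f u v ≤ maxErr f u v' := by
  rcases eq_or_lt_of_le hvv with h | h
  · rw [h]
  · exact (maxErr_lt_right hf hconc hau huv h hvb).le

lemma maxErr_le_left (hf : ContinuousOn f (Set.Icc a b))
    (hconc : StrictConcaveOn ℝ (Set.Icc a b) f) {u u' v : ℝ}
    (hau : a ≤ u) (huu : u ≤ u') (huv : u' < v) (hvb : v ≤ b) :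
    maxErr f u' v ≤ maxErr f u v := by
  rcases eq_or_lt_of_le huu with h | h
  · rw [h]
  · exact (maxErr_lt_left hf hconc hau h huv hvb).le

end Aux

section Aux2
variable {f : ℝ → ℝ} {a b : ℝ}

lemma step_lt (hf : ContinuousOn f (Set.Icc a b))
    (hconc : StrictConcaveOn ℝ (Set.Icc a b) f) {p q p' q' : ℝ}
    (hap : a ≤ p) (hpb : p' ≤ b) (hqb : q' ≤ b)
    (hpq : p ≤ q) (hp : p < p') (hq : q < q')
    (hE : maxErr f p p' < maxErr f q q') : p' < q' := by
  by_contra h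
  push_neg at h
  have h1 : maxErr f q q' ≤ maxErr f p q' :=
    maxErr_le_left hf hconc hap hpq hq hqb
  have h2 : maxErr f p q' ≤ maxErr f p p' :=
    maxErr_le_right hf hconc hap (lt_of_le_of_lt hpq hq) h hpb
  linarith

lemma step_eq (hf : ContinuousOn f (Set.Icc a b))
    (hconc : StrictConcaveOn ℝ (Set.Icc a b) f) {p q p' q' : ℝ}
    (hap : a ≤ p) (hpb : p' ≤ b) (hqb : q' ≤ b)
    (hpq : p = q) (hp : p < p') (hq : q < q')
    (hE : maxErr f p p' = maxErr f q q') : p' = q' := by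
  subst hpq
  rcases lt_trichotomy p' q' with h | h | h
  · exact absurd hE (ne_of_lt (maxErr_lt_right hf hconc hap hp h hqb))
  · exact h
  · exact absurd hE.symm (ne_of_lt (maxErr_lt_right hf hconc hap hq h hpb))

end Aux2


/-- A breakpoint vector with all interval maximum absolute errors equal
is unique (given fixed endpoints) and minimizes the overall maximum absolute error. -/
theorem equal_errors_unique_and_optimal (f : ℝ → ℝ) (N : ℕ) (hN : 3 ≤ N)
    (x y : ℕ → ℝ)
    (hxmono : ∀ i j, i < j → j ≤ N - 1 → x i < x j)
    (hymono : ∀ i j, i < j → j ≤ N - 1 → y i < y j)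
    (hy0 : y 0 = x 0) (hyN : y (N - 1) = x (N - 1))
    (hf : ContinuousOn f (Set.Icc (x 0) (x (N - 1))))
    (hconc : StrictConcaveOn ℝ (Set.Icc (x 0) (x (N - 1))) f)
    (hxeq : ∀ i j, i < N - 1 → j < N - 1 →
      maxErr f (x i) (x (i + 1)) = maxErr f (x j) (x (j + 1)))
    (hyeq : ∀ i j, i < N - 1 → j < N - 1 →
      maxErr f (y i) (y (i + 1)) = maxErr f (y j) (y (j + 1))) :
    (∀ i, i ≤ N - 1 → x i = y i) ∧
    (∀ z : ℕ → ℝ, z 0 = x 0 → z (N - 1) = x (N - 1) →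
      (∀ i j, i < j → j ≤ N - 1 → z i < z j) →
      (Finset.range (N - 1)).sup' (Finset.nonempty_range_iff.mpr (by omega))
        (fun i => maxErr f (x i) (x (i + 1))) ≤
      (Finset.range (N - 1)).sup' (Finset.nonempty_range_iff.mpr (by omega))
        (fun i => maxErr f (z i) (z (i + 1)))) := by
  set n := N - 1 with hn
  have hn2 : 2 ≤ n := by omega
  -- bounds for any admissible sequence
  have hbnd : ∀ (p : ℕ → ℝ), (∀ i j, i < j → j ≤ n → p i < p j) →
      p 0 = x 0 → p n = x n → ∀ i, i ≤ n → x 0 ≤ p i ∧ p i ≤ x n := by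
    intro p hmono h0 hend i hi
    constructor
    · rcases Nat.eq_zero_or_pos i with h | h
      · rw [h, h0]
      · rw [← h0]; exact (hmono 0 i h hi).le
    · rcases eq_or_lt_of_le hi with h | h
      · rw [h, hend]
      · rw [← hend]; exact (hmono i n h le_rfl).le
  -- the chain argument
  have chain : ∀ (p q : ℕ → ℝ), (∀ i j, i < j → j ≤ n → p i < p j) →
      (∀ i j, i < j → j ≤ n → q i < q j) →
      p 0 = x 0 → q 0 = x 0 → p n = x n → q n = x n →
      (∀ i, i < n → maxErr f (p i) (p (i + 1)) < maxErr f (q i) (q (i + 1))) →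
      False := by
    intro p q hpm hqm hp0 hq0 hpn hqn hlt
    have hbp := hbnd p hpm hp0 hpn
    have hbq := hbnd q hqm hq0 hqn
    have claim : ∀ k, k + 1 ≤ n → p (k + 1) < q (k + 1) := by
      intro k
      induction k with
      | zero =>
        intro h1
        exact step_lt hf hconc (hbp 0 (by omega)).1 (hbp 1 h1).2 (hbq 1 h1).2
          (le_of_eq (hp0.trans hq0.symm)) (hpm 0 1 one_pos h1) (hqm 0 1 one_pos h1)
          (hlt 0 (by omega))
      | succ m ih =>
        intro h1
        have hm := ih (by omega)
        exact step_lt hf hconc (hbp (m + 1) (by omega)).1 (hbp (m + 2) h1).2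
          (hbq (m + 2) h1).2 hm.le (hpm (m + 1) (m + 2) (by omega) h1)
          (hqm (m + 1) (m + 2) (by omega) h1) (hlt (m + 1) (by omega))
    have hlast := claim (n - 1) (by omega)
    have hidx : n - 1 + 1 = n := by omega
    rw [hidx, hpn, hqn] at hlast
    exact lt_irrefl _ hlast
  -- common error levels are equal
  have hExEy : maxErr f (x 0) (x 1) = maxErr f (y 0) (y 1) := by
    by_contra h
    rcases lt_or_gt_of_ne h with h | h
    · exact chain x y hxmono hymono rfl hy0 rfl hyN (fun i hi => by
        rw [hxeq i 0 hi (by omega), hyeq i 0 hi (by omega)]; exact h)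
    · exact chain y x hymono hxmono hy0 rfl hyN rfl (fun i hi => by
        rw [hxeq i 0 hi (by omega), hyeq i 0 hi (by omega)]; exact h)
  have hby := hbnd y hymono hy0 hyN
  have hbx := hbnd x hxmono rfl rfl
  constructor
  · -- uniqueness
    intro i
    induction i with
    | zero => intro _; exact hy0.symm
    | succ m ih =>
      intro h1
      have hm := ih (by omega)
      exact step_eq hf hconc (hbx m (by omega)).1 (hbx (m + 1) h1).2
        (hby (m + 1) h1).2 hm (hxmono m (m + 1) (by omega) h1)
        (hymono m (m + 1) (by omega) h1)
        (by rw [hxeq m 0 (by omega) (by omega), hyeq m 0 (by omega) (by omega)]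
            exact hExEy)
  · -- optimality
    intro z hz0 hzN hzmono
    apply Finset.sup'_le
    intro i hi
    rw [hxeq i 0 (Finset.mem_range.mp hi) (by omega)]
    by_contra hcon
    push_neg at hcon
    exact chain z x hzmono hxmono hz0 rfl hzN rfl (fun j hj => by
      rw [hxeq j 0 hj (by omega)]
      exact lt_of_le_of_lt
        (Finset.le_sup' (fun i => maxErr f (z i) (z (i + 1))) (Finset.mem_range.mpr hj))
        hcon)
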